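/- arXiv:1909.04203 — 3 statements merged into one kernel-verified Lean document; each statement's English description precedes it below -/
import Mathlib

section
/- Define, for real symmetric matrices L₁ (n₁×n₁), L₂ (n₂×n₂), and L₃ (n₃×n₃), d(L_a, L_b) = inf over matrices P with P^T P = I of ||P L_a − L_b P||_F. Then d(L₁, L₃) ≤ d(L₁, L₂) + d(L₂, L₃). -/
open Matrix

/-- Frobenius norm of a real matrix. -/
noncomputable def frob {a b : ℕ} (A : Matrix (Fin a) (Fin b) ℝ) : ℝ :=
  Real.sqrt (Matrix.trace (Aᵀ * A))

/-- The α = 1 linear graph diffusion distance between symmetric matrices. -/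
noncomputable def linDist {a b : ℕ} (La : Matrix (Fin a) (Fin a) ℝ)
    (Lb : Matrix (Fin b) (Fin b) ℝ) : ℝ :=
  sInf {x : ℝ | ∃ P : Matrix (Fin b) (Fin a) ℝ, Pᵀ * P = 1 ∧ x = frob (P * La - Lb * P)}

attribute [local instance] Matrix.frobeniusNormedAddCommGroup

lemma trace_tmul_nonneg {a b : ℕ} (A : Matrix (Fin a) (Fin b) ℝ) :
    0 ≤ Matrix.trace (Aᵀ * A) := by
  unfold Matrix.trace Matrix.diag
  apply Finset.sum_nonneg
  intro j _
  rw [Matrix.mul_apply]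
  apply Finset.sum_nonneg
  intro i _
  simp [Matrix.transpose_apply, mul_self_nonneg]

lemma frob_nonneg {a b : ℕ} (A : Matrix (Fin a) (Fin b) ℝ) : 0 ≤ frob A :=
  Real.sqrt_nonneg _

lemma frob_eq_norm {a b : ℕ} (A : Matrix (Fin a) (Fin b) ℝ) : frob A = ‖A‖ := by
  rw [frob, Matrix.frobenius_norm_def, Real.sqrt_eq_rpow]
  congr 1
  rw [Finset.sum_comm]
  unfold Matrix.trace Matrix.diag
  congr 1; ext j; rw [Matrix.mul_apply]
  congr 1; ext i
  rw [Matrix.transpose_apply, Real.rpow_two, Real.norm_eq_abs, sq_abs, sq]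

lemma frob_add_le {a b : ℕ} (A B : Matrix (Fin a) (Fin b) ℝ) :
    frob (A + B) ≤ frob A + frob B := by
  simp only [frob_eq_norm]; exact norm_add_le A B

lemma frob_mul_left {a b c : ℕ} (Q : Matrix (Fin c) (Fin b) ℝ) (hQ : Qᵀ * Q = 1)
    (M : Matrix (Fin b) (Fin a) ℝ) : frob (Q * M) = frob M := by
  unfold frob
  rw [Matrix.transpose_mul, Matrix.mul_assoc, ← Matrix.mul_assoc Qᵀ Q M, hQ, Matrix.one_mul]

lemma frob_mul_right {a b c : ℕ} (P : Matrix (Fin b) (Fin a) ℝ) (hP : Pᵀ * P = 1)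
    (M : Matrix (Fin c) (Fin b) ℝ) : frob (M * P) ≤ frob M := by
  apply Real.sqrt_le_sqrt
  have hEt : (1 - P * Pᵀ)ᵀ = 1 - P * Pᵀ := by
    rw [Matrix.transpose_sub, Matrix.transpose_one, Matrix.transpose_mul,
      Matrix.transpose_transpose]
  have hPPP : P * Pᵀ * (P * Pᵀ) = P * Pᵀ := by
    rw [Matrix.mul_assoc, ← Matrix.mul_assoc Pᵀ P Pᵀ, hP, Matrix.one_mul]
  have hEE : (1 - P * Pᵀ) * (1 - P * Pᵀ) = 1 - P * Pᵀ := by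
    simp only [Matrix.sub_mul, Matrix.mul_sub, Matrix.one_mul, Matrix.mul_one, hPPP]
    abel
  have key : Matrix.trace ((M * (1 - P * Pᵀ))ᵀ * (M * (1 - P * Pᵀ)))
      = Matrix.trace (Mᵀ * M) - Matrix.trace ((M * P)ᵀ * (M * P)) := by
    rw [Matrix.transpose_mul, hEt]
    have h1 : (1 - P * Pᵀ) * Mᵀ * (M * (1 - P * Pᵀ))
        = (1 - P * Pᵀ) * (Mᵀ * M * (1 - P * Pᵀ)) := by
      rw [Matrix.mul_assoc, Matrix.mul_assoc]
    rw [h1, Matrix.trace_mul_comm (1 - P * Pᵀ) (Mᵀ * M * (1 - P * Pᵀ)),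
      Matrix.mul_assoc (Mᵀ * M) (1 - P * Pᵀ) (1 - P * Pᵀ), hEE,
      Matrix.mul_sub, Matrix.mul_one, Matrix.trace_sub]
    congr 1
    rw [Matrix.transpose_mul, ← Matrix.mul_assoc (Mᵀ * M) P Pᵀ,
      Matrix.trace_mul_comm (Mᵀ * M * P) Pᵀ, Matrix.mul_assoc Mᵀ M P,
      ← Matrix.mul_assoc Pᵀ Mᵀ (M * P)]
  have hnn := trace_tmul_nonneg (M * (1 - P * Pᵀ))
  linarith

lemma exists_orth {a b : ℕ} (hab : a ≤ b) :
    ∃ P : Matrix (Fin b) (Fin a) ℝ, Pᵀ * P = 1 := by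
  refine ⟨Matrix.of fun i j => if i = Fin.castLE hab j then 1 else 0, ?_⟩
  ext j k
  simp only [Matrix.mul_apply, Matrix.transpose_apply, Matrix.of_apply, ite_mul, one_mul,
    zero_mul, Matrix.one_apply]
  rw [Finset.sum_ite_eq' Finset.univ (Fin.castLE hab j)
    (fun i => if i = Fin.castLE hab k then (1 : ℝ) else 0)]
  simp [Fin.castLE_inj, eq_comm]

lemma linDist_set_nonempty {a b : ℕ} (hab : a ≤ b) (La : Matrix (Fin a) (Fin a) ℝ)
    (Lb : Matrix (Fin b) (Fin b) ℝ) :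
    {x : ℝ | ∃ P : Matrix (Fin b) (Fin a) ℝ, Pᵀ * P = 1 ∧
      x = frob (P * La - Lb * P)}.Nonempty := by
  obtain ⟨P, hP⟩ := exists_orth hab
  exact ⟨_, P, hP, rfl⟩

lemma linDist_set_bddBelow {a b : ℕ} (La : Matrix (Fin a) (Fin a) ℝ)
    (Lb : Matrix (Fin b) (Fin b) ℝ) :
    BddBelow {x : ℝ | ∃ P : Matrix (Fin b) (Fin a) ℝ, Pᵀ * P = 1 ∧
      x = frob (P * La - Lb * P)} := by
  refine ⟨0, fun x hx => ?_⟩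
  obtain ⟨P, hP, rfl⟩ := hx
  exact frob_nonneg _

theorem linDist_triangle {n₁ n₂ n₃ : ℕ} (h12 : n₁ ≤ n₂) (h23 : n₂ ≤ n₃)
    (L₁ : Matrix (Fin n₁) (Fin n₁) ℝ) (L₂ : Matrix (Fin n₂) (Fin n₂) ℝ)
    (L₃ : Matrix (Fin n₃) (Fin n₃) ℝ)
    (h₁ : L₁.IsSymm) (h₂ : L₂.IsSymm) (h₃ : L₃.IsSymm) :
    linDist L₁ L₃ ≤ linDist L₁ L₂ + linDist L₂ L₃ := by
  refine le_of_forall_pos_le_add fun ε hε => ?_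
  have hε2 : (0:ℝ) < ε / 2 := by linarith
  obtain ⟨x, hxmem, hxlt⟩ := exists_lt_of_csInf_lt (linDist_set_nonempty h12 L₁ L₂)
    (lt_add_of_pos_right (linDist L₁ L₂) hε2)
  obtain ⟨P, hP, rfl⟩ := hxmem
  obtain ⟨y, hymem, hylt⟩ := exists_lt_of_csInf_lt (linDist_set_nonempty h23 L₂ L₃)
    (lt_add_of_pos_right (linDist L₂ L₃) hε2)
  obtain ⟨Q, hQ, rfl⟩ := hymem
  have hR : (Q * P)ᵀ * (Q * P) = 1 := by
    rw [Matrix.transpose_mul, Matrix.mul_assoc, ← Matrix.mul_assoc Qᵀ Q P, hQ, Matrix.one_mul, hP]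
  have hdecomp : Q * P * L₁ - L₃ * (Q * P)
      = Q * (P * L₁ - L₂ * P) + (Q * L₂ - L₃ * Q) * P := by
    rw [Matrix.mul_sub, Matrix.sub_mul, ← Matrix.mul_assoc Q P L₁, ← Matrix.mul_assoc Q L₂ P,
      ← Matrix.mul_assoc L₃ Q P]
    abel
  have hkey : frob (Q * P * L₁ - L₃ * (Q * P))
      ≤ frob (P * L₁ - L₂ * P) + frob (Q * L₂ - L₃ * Q) := by
    rw [hdecomp]
    refine (frob_add_le _ _).trans ?_
    rw [frob_mul_left Q hQ]
    exact add_le_add le_rfl (frob_mul_right P hP _)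
  have hle : linDist L₁ L₃ ≤ frob (Q * P * L₁ - L₃ * (Q * P)) :=
    csInf_le (linDist_set_bddBelow L₁ L₃) ⟨Q * P, hR, rfl⟩
  linarith
end

section
/- For fixed real symmetric Laplacians L₁, L₂ and fixed α > 0, the infimum over column-orthogonal P of ||(1/α) P L₁ − α L₂ P||_F² is at most the optimal value of the linear assignment problem matching each eigenvalue λ^{(1)}_j of L₁ to a distinct eigenvalue λ^{(2)}_i of L₂ with cost ((1/α)λ^{(1)}_j − αλ^{(2)}_i)². -/
open Matrix

theorem inf_le_lap_optimum {n₁ n₂ : ℕ} (h : n₁ ≤ n₂)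
    (L₁ : Matrix (Fin n₁) (Fin n₁) ℝ) (L₂ : Matrix (Fin n₂) (Fin n₂) ℝ)
    (U₁ : Matrix (Fin n₁) (Fin n₁) ℝ) (U₂ : Matrix (Fin n₂) (Fin n₂) ℝ)
    (lam₁ : Fin n₁ → ℝ) (lam₂ : Fin n₂ → ℝ)
    (hU₁ : U₁ᵀ * U₁ = 1) (hU₁' : U₁ * U₁ᵀ = 1)
    (hU₂ : U₂ᵀ * U₂ = 1) (hU₂' : U₂ * U₂ᵀ = 1)
    (hL₁ : L₁ = U₁ * Matrix.diagonal lam₁ * U₁ᵀ)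
    (hL₂ : L₂ = U₂ * Matrix.diagonal lam₂ * U₂ᵀ)
    (α : ℝ) (hα : 0 < α) :
    sInf {x : ℝ | ∃ P : Matrix (Fin n₂) (Fin n₁) ℝ, Pᵀ * P = 1 ∧
        x = Matrix.trace (((1 / α) • (P * L₁) - α • (L₂ * P))ᵀ *
          ((1 / α) • (P * L₁) - α • (L₂ * P)))} ≤
    sInf {x : ℝ | ∃ m : Fin n₁ → Fin n₂, Function.Injective m ∧
        x = ∑ j : Fin n₁, ((1 / α) * lam₁ j - α * lam₂ (m j)) ^ 2} := by
  classical
  have cancel1 : ∀ {k : ℕ} (X : Matrix (Fin n₁) (Fin k) ℝ), U₁ᵀ * (U₁ * X) = X := by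
    intro k X; rw [← Matrix.mul_assoc, hU₁, Matrix.one_mul]
  have cancel2 : ∀ {k : ℕ} (X : Matrix (Fin n₂) (Fin k) ℝ), U₂ᵀ * (U₂ * X) = X := by
    intro k X; rw [← Matrix.mul_assoc, hU₂, Matrix.one_mul]
  have hbdd : BddBelow {x : ℝ | ∃ P : Matrix (Fin n₂) (Fin n₁) ℝ, Pᵀ * P = 1 ∧
      x = Matrix.trace (((1 / α) • (P * L₁) - α • (L₂ * P))ᵀ *
        ((1 / α) • (P * L₁) - α • (L₂ * P)))} := by
    refine ⟨0, ?_⟩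
    rintro x ⟨P, hP, rfl⟩
    set A := (1 / α) • (P * L₁) - α • (L₂ * P)
    have : Matrix.trace (Aᵀ * A) = ∑ j, ∑ i, (A i j) ^ 2 := by
      simp [Matrix.trace, Matrix.diag, Matrix.mul_apply, sq]
    rw [this]
    positivity
  apply le_csInf
  · exact ⟨_, Fin.castLE h, Fin.castLE_injective h, rfl⟩
  · rintro t ⟨m, hm, rfl⟩
    apply csInf_le hbdd
    set Q : Matrix (Fin n₂) (Fin n₁) ℝ :=
      Matrix.of fun i j => if i = m j then 1 else 0 with hQdef
    have hQ : Qᵀ * Q = 1 := by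
      ext j k
      simp only [Matrix.mul_apply, Matrix.transpose_apply, hQdef, Matrix.of_apply,
        Matrix.one_apply, ite_mul, one_mul, zero_mul]
      rw [Finset.sum_ite_eq' Finset.univ (m j)]
      simp [hm.eq_iff, eq_comm]
    refine ⟨U₂ * Q * U₁ᵀ, ?_, ?_⟩
    · calc (U₂ * Q * U₁ᵀ)ᵀ * (U₂ * Q * U₁ᵀ)
          = U₁ * (Qᵀ * (U₂ᵀ * (U₂ * (Q * U₁ᵀ)))) := by
            simp only [Matrix.transpose_mul, Matrix.transpose_transpose, Matrix.mul_assoc]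
      _ = U₁ * (Qᵀ * Q * U₁ᵀ) := by rw [cancel2, Matrix.mul_assoc]
      _ = 1 := by rw [hQ, Matrix.one_mul, hU₁']
    · set M : Matrix (Fin n₂) (Fin n₁) ℝ :=
        (1 / α) • (Q * Matrix.diagonal lam₁) - α • (Matrix.diagonal lam₂ * Q) with hMdef
      have hA : (1 / α) • (U₂ * Q * U₁ᵀ * L₁) - α • (L₂ * (U₂ * Q * U₁ᵀ))
          = U₂ * M * U₁ᵀ := by
        rw [hL₁, hL₂, hMdef]
        have e1 : U₂ * Q * U₁ᵀ * (U₁ * Matrix.diagonal lam₁ * U₁ᵀ)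
            = U₂ * (Q * Matrix.diagonal lam₁) * U₁ᵀ := by
          simp only [Matrix.mul_assoc]
          rw [← Matrix.mul_assoc U₁ᵀ U₁, hU₁, Matrix.one_mul]
        have e2 : U₂ * Matrix.diagonal lam₂ * U₂ᵀ * (U₂ * Q * U₁ᵀ)
            = U₂ * (Matrix.diagonal lam₂ * Q) * U₁ᵀ := by
          simp only [Matrix.mul_assoc]
          rw [← Matrix.mul_assoc U₂ᵀ U₂, hU₂, Matrix.one_mul]
        rw [e1, e2, Matrix.mul_sub, Matrix.sub_mul, Matrix.mul_smul, Matrix.mul_smul,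
          Matrix.smul_mul, Matrix.smul_mul]
      rw [hA]
      have htr : Matrix.trace ((U₂ * M * U₁ᵀ)ᵀ * (U₂ * M * U₁ᵀ))
          = Matrix.trace (Mᵀ * M) := by
        have : (U₂ * M * U₁ᵀ)ᵀ * (U₂ * M * U₁ᵀ) = U₁ * (Mᵀ * M) * U₁ᵀ := by
          simp only [Matrix.transpose_mul, Matrix.transpose_transpose, Matrix.mul_assoc]
          rw [cancel2]
        rw [this, Matrix.trace_mul_cycle, ← Matrix.mul_assoc, hU₁, Matrix.one_mul]
      rw [htr]
      have hM : ∀ i j, M i j = if i = m j then (1 / α) * lam₁ j - α * lam₂ i else 0 := by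
        intro i j
        simp only [hMdef, Matrix.sub_apply, Matrix.smul_apply, Matrix.mul_diagonal,
          Matrix.diagonal_mul, hQdef, Matrix.of_apply, smul_eq_mul]
        by_cases hij : i = m j <;> simp [hij] <;> ring
      have : Matrix.trace (Mᵀ * M) = ∑ j, ∑ i, (M i j) ^ 2 := by
        simp [Matrix.trace, Matrix.diag, Matrix.mul_apply, sq]
      rw [this]
      refine Finset.sum_congr rfl fun j _ => ?_
      rw [Finset.sum_congr rfl (fun i _ => by rw [hM])]
      simp [Finset.sum_ite_eq' Finset.univ (m j) (fun i => ((1/α) * lam₁ j - α * lam₂ i)^2)]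
end

section
/- Let Pa_n denote the path graph on n vertices with Laplacian eigenvalues {−2 + 2cos(πk/(n−1)) : k = 0,...,n−1}. Fix t > 0. Then lim_{n→∞} Σ_{k=0}^{n−1} (exp(t(−2 + 2cos(πk/n))) − exp(t(−2 + 2cos(πk/(n+1)))))² = 0. -/
/-! The function `x ↦ exp (t * (-2 + 2 * cos x))` is Lipschitz on `ℝ`, since its exponent is
bounded by `4 |t|`. The angles `π k / n` and `π k / (n + 1)` of matching eigenvalues differ by
at most `π / n`, so each of the `n` summands is `O(1 / n²)` and the sum is `O(1 / n)`. -/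

open Real Filter Finset

theorem abs_exp_sub_exp_le {a b c : ℝ} (ha : a ≤ c) (hb : b ≤ c) :
    |exp a - exp b| ≤ exp c * |a - b| := by
  have hderiv : ∀ x ∈ Set.Iic c, ‖deriv exp x‖ ≤ exp c := fun x hx => by
    simpa [abs_of_pos (exp_pos x)] using exp_le_exp.2 hx
  simpa only [Real.norm_eq_abs] using
    (convex_Iic c).norm_image_sub_le_of_norm_deriv_le (fun _ _ => differentiableAt_exp)
      hderiv hb ha

theorem abs_exp_mul_cos_sub_exp_mul_cos_le (t x y : ℝ) :
    |exp (t * (-2 + 2 * cos x)) - exp (t * (-2 + 2 * cos y))| ≤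
      2 * |t| * exp (4 * |t|) * |x - y| := by
  have hbound : ∀ z, t * (-2 + 2 * cos z) ≤ 4 * |t| := fun z => by
    have h : |-2 + 2 * cos z| ≤ 4 :=
      abs_le.2 ⟨by linarith [neg_one_le_cos z], by linarith [cos_le_one z]⟩
    calc t * (-2 + 2 * cos z) ≤ |t * (-2 + 2 * cos z)| := le_abs_self _
      _ = |t| * |-2 + 2 * cos z| := abs_mul _ _
      _ ≤ |t| * 4 := by gcongr
      _ = 4 * |t| := mul_comm _ _
  calc _ ≤ exp (4 * |t|) * |t * (-2 + 2 * cos x) - t * (-2 + 2 * cos y)| :=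
        abs_exp_sub_exp_le (hbound x) (hbound y)
    _ = exp (4 * |t|) * (2 * |t| * |cos x - cos y|) := by
        rw [← mul_sub, abs_mul,
          show -2 + 2 * cos x - (-2 + 2 * cos y) = 2 * (cos x - cos y) by ring, abs_mul, abs_two]
        ring
    _ ≤ exp (4 * |t|) * (2 * |t| * |x - y|) := by
        have := abs_cos_sub_cos_le x y
        gcongr
    _ = _ := by ring

theorem abs_mul_div_sub_mul_div_succ_le (a : ℝ) {k n : ℕ} (hk : k < n) :
    |a * k / n - a * k / (n + 1)| ≤ |a| / n := by
  have hn : (0 : ℝ) < n := by exact_mod_cast (Nat.zero_le k).trans_lt hk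
  have hkn : (k : ℝ) ≤ n + 1 := by exact_mod_cast (hk.trans (Nat.lt_succ_self n)).le
  have hsub : a * k / n - a * k / (n + 1) = a * (k / (n + 1)) / n := by
    field_simp; ring
  rw [hsub, abs_div, abs_mul, abs_of_pos hn,
    abs_of_nonneg (by positivity : (0 : ℝ) ≤ k / (n + 1))]
  gcongr
  exact mul_le_of_le_one_right (abs_nonneg a) ((div_le_one (by positivity)).2 hkn)

theorem sum_sq_sub_le_of_abs_sub_le {f : ℝ → ℝ} {K : ℝ} (hf : ∀ x y, |f x - f y| ≤ K * |x - y|)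
    (a : ℝ) (n : ℕ) :
    ∑ k ∈ range n, (f (a * k / n) - f (a * k / (n + 1))) ^ 2 ≤ (K * a) ^ 2 / n := by
  have hterm : ∀ k ∈ range n, (f (a * k / n) - f (a * k / (n + 1))) ^ 2 ≤ (K * |a| / n) ^ 2 :=
    fun k hk => by
      rw [← sq_abs]
      have hK : 0 ≤ K := by simpa using (abs_nonneg _).trans (hf 0 1)
      gcongr
      calc _ ≤ K * |a * k / n - a * k / (n + 1)| := hf _ _
        _ ≤ K * (|a| / n) := by gcongr; exact abs_mul_div_sub_mul_div_succ_le a (mem_range.1 hk)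
        _ = K * |a| / n := by ring
  calc _ ≤ ∑ _k ∈ range n, (K * |a| / n) ^ 2 := sum_le_sum hterm
    _ = n * (K * |a| / n) ^ 2 := by rw [sum_const, card_range, nsmul_eq_mul]
    _ = (K * a) ^ 2 / n := by
        rcases n.eq_zero_or_pos with rfl | hn
        · simp
        · field_simp; rw [sq_abs]

theorem tendsto_sum_sq_sub_of_abs_sub_le {f : ℝ → ℝ} {K : ℝ}
    (hf : ∀ x y, |f x - f y| ≤ K * |x - y|) (a : ℝ) :
    Tendsto (fun n : ℕ => ∑ k ∈ range n, (f (a * k / n) - f (a * k / (n + 1))) ^ 2)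
      atTop (nhds 0) :=
  squeeze_zero (fun _ => sum_nonneg fun _ _ => sq_nonneg _)
    (sum_sq_sub_le_of_abs_sub_le hf a) (tendsto_const_div_atTop_nhds_zero_nat _)

theorem path_graph_distance_limit_general (t : ℝ) :
    Tendsto (fun n : ℕ =>
      ∑ k ∈ Finset.range n,
        (Real.exp (t * (-2 + 2 * Real.cos (Real.pi * k / n))) -
          Real.exp (t * (-2 + 2 * Real.cos (Real.pi * k / (n + 1))))) ^ 2)
      atTop (nhds 0) :=
  tendsto_sum_sq_sub_of_abs_sub_le (abs_exp_mul_cos_sub_exp_mul_cos_le t) π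

theorem path_graph_distance_limit (t : ℝ) (ht : 0 < t) :
    Tendsto (fun n : ℕ =>
      ∑ k ∈ Finset.range n,
        (Real.exp (t * (-2 + 2 * Real.cos (Real.pi * k / n))) -
          Real.exp (t * (-2 + 2 * Real.cos (Real.pi * k / (n + 1))))) ^ 2)
      atTop (nhds 0) :=
  path_graph_distance_limit_general t
end
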